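/- Let Γ be a Coxeter graph with canonical root system Φ and canonical bilinear form ⟨·,·⟩, and let g be a linear map of V preserving ⟨·,·⟩ and mapping Φ to Φ, with the property that ⟨γ, g(γ)⟩ = 0 for every γ ∈ Φ with g(γ) ≠ γ. If α, β ∈ Φ satisfy g(α) = α and ⟨α, β⟩ ∉ {0, 1, -1}, then g(β) = β. -/

import Mathlib

open Real

/-- A Coxeter matrix on the set `S`, with `0` representing the label `∞`. -/
structure CoxeterMat (S : Type*) where
  m : S → S → ℕ
  diagonal : ∀ s, m s s = 1
  symmetric : ∀ s t, m s t = m t s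
  off_diagonal : ∀ s t, s ≠ t → m s t ≠ 1

namespace CoxeterMat

variable {S : Type*} (M : CoxeterMat S)

/-- The coefficient `⟨α_s, α_t⟩ = -2 cos (π / m_{s,t})`, with value `-2` when `m_{s,t} = ∞`. -/
noncomputable def c (s t : S) : ℝ :=
  if M.m s t = 0 then -2 else -2 * Real.cos (Real.pi / (M.m s t : ℝ))

/-- The simple root `α_s` in `V = ⊕_{s ∈ S} ℝ α_s`. -/
noncomputable def sroot (s : S) : S →₀ ℝ := Finsupp.single s 1

/-- The canonical bilinear form of the Coxeter graph. -/
noncomputable def bform : (S →₀ ℝ) →ₗ[ℝ] (S →₀ ℝ) →ₗ[ℝ] ℝ :=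
  Finsupp.lift _ ℝ S fun s => Finsupp.lift ℝ ℝ S fun t => M.c s t

/-- The simple reflection `σ_s : x ↦ x - ⟨α_s, x⟩ α_s`. -/
noncomputable def sigma (s : S) : (S →₀ ℝ) →ₗ[ℝ] (S →₀ ℝ) :=
  LinearMap.id - (M.bform (sroot s)).smulRight (sroot s)

/-- The Coxeter group `W`, realized as the subgroup of linear automorphisms of `V`
generated by the simple reflections. -/
noncomputable def Wgrp : Subgroup ((S →₀ ℝ) ≃ₗ[ℝ] (S →₀ ℝ)) :=
  Subgroup.closure {w | ∃ s : S, (w : (S →₀ ℝ) →ₗ[ℝ] (S →₀ ℝ)) = M.sigma s}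

/-- The canonical root system `Φ = {w(α_s) | w ∈ W, s ∈ S}`. -/
def Phi : Set (S →₀ ℝ) := {b | ∃ w ∈ M.Wgrp, ∃ s : S, b = w (sroot s)}

/-- The set of positive roots. -/
def PhiPos : Set (S →₀ ℝ) := {b | b ∈ M.Phi ∧ ∀ s, 0 ≤ b s}

/-- The equivalence relation `≡` on `Φ` generated by `α ≡₁ β ⟺ ⟨α, β⟩ ∉ {0, 1, -1}`. -/
def equivR : (S →₀ ℝ) → (S →₀ ℝ) → Prop :=
  Relation.EqvGen (fun a b => a ∈ M.Phi ∧ b ∈ M.Phi ∧ M.bform a b ∉ ({0, 1, -1} : Set ℝ))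

/-- The underlying graph of the Coxeter graph: `s` and `t` are joined iff `m_{s,t} ≥ 3`
(including `m_{s,t} = ∞`). -/
def graph : SimpleGraph S where
  Adj s t := s ≠ t ∧ M.m s t ≠ 2
  symm := ⟨fun s t h => ⟨h.1.symm, by rw [M.symmetric]; exact h.2⟩⟩
  loopless := ⟨fun s h => h.1 rfl⟩

/-- The action of a permutation of `S` on `V`. -/
noncomputable def permV (g : Equiv.Perm S) : (S →₀ ℝ) ≃ₗ[ℝ] (S →₀ ℝ) :=
  Finsupp.domLCongr g

/-- The set of elements of `W` fixed by the group `G` of symmetries (acting by conjugation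
by the corresponding permutations of coordinates). -/
noncomputable def WfixG (G : Subgroup (Equiv.Perm S)) :
    Set ((S →₀ ℝ) ≃ₗ[ℝ] (S →₀ ℝ)) :=
  {w | w ∈ M.Wgrp ∧ ∀ g ∈ G, permV g * w = w * permV g}

/-- Construct a simply laced Coxeter matrix from an adjacency relation. -/
noncomputable def ofAdj (A : S → S → Prop) (hs : ∀ s t, A s t → A t s)
    (hi : ∀ s, ¬ A s s) : CoxeterMat S where
  m s t := open Classical in if s = t then 1 else if A s t then 3 else 2
  diagonal s := by simp
  symmetric s t := by
    classical
    by_cases h : s = t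
    · subst h; rfl
    · have h' : t ≠ s := Ne.symm h
      simp only [if_neg h, if_neg h']
      by_cases hA : A s t
      · rw [if_pos hA, if_pos (hs s t hA)]
      · rw [if_neg hA, if_neg (fun h2 => hA (hs t s h2))]
  off_diagonal s t h := by
    classical
    simp only [if_neg h]
    split <;> norm_num

/-- Isomorphism of Coxeter graphs. -/
def Iso {T : Type*} (M : CoxeterMat S) (N : CoxeterMat T) : Prop :=
  ∃ e : S ≃ T, ∀ s t, N.m (e s) (e t) = M.m s t

/-- The full Coxeter subgraph spanned by `Y ⊆ S`. -/
def restrict (Y : Set S) : CoxeterMat Y where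
  m s t := M.m s t
  diagonal s := M.diagonal s
  symmetric s t := M.symmetric s t
  off_diagonal s t h := M.off_diagonal s t (fun hh => h (Subtype.ext hh))

end CoxeterMat

open CoxeterMat

/-- The Coxeter graph `A_n`: a path with `n` vertices. -/
noncomputable def pathA (n : ℕ) : CoxeterMat (Fin n) :=
  ofAdj (fun i j => i.val + 1 = j.val ∨ j.val + 1 = i.val)
    (fun _ _ h => h.symm)
    (fun s h => by rcases h with h | h <;> omega)

/-- The Coxeter graph `D_n`: a path `0 — 1 — ⋯ — (n-2)` together with an extra vertex `n-1`
joined to `n-3`. -/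
noncomputable def Dmat (n : ℕ) : CoxeterMat (Fin n) :=
  ofAdj (fun i j => i ≠ j ∧
      (((i.val + 1 = j.val ∧ j.val ≤ n - 2) ∨ (i.val + 2 = j.val ∧ j.val = n - 1)) ∨
       ((j.val + 1 = i.val ∧ i.val ≤ n - 2) ∨ (j.val + 2 = i.val ∧ i.val = n - 1))))
    (fun _ _ h => ⟨h.1.symm, h.2.symm⟩)
    (fun s h => h.1 rfl)

/-- Adjacency relation determined by a list of edges. -/
def listAdj {n : ℕ} (L : List (Fin n × Fin n)) (i j : Fin n) : Prop :=
  (i, j) ∈ L ∨ (j, i) ∈ L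

instance {n : ℕ} (L : List (Fin n × Fin n)) (i j : Fin n) : Decidable (listAdj L i j) := by
  unfold listAdj; infer_instance

/-- The Coxeter graph `E₆`. -/
noncomputable def E6mat : CoxeterMat (Fin 6) :=
  ofAdj (listAdj [(0,2),(2,3),(3,4),(4,5),(1,3)])
    (fun _ _ h => h.symm) (by decide)

/-- The Coxeter graph `E₇`. -/
noncomputable def E7mat : CoxeterMat (Fin 7) :=
  ofAdj (listAdj [(0,2),(2,3),(3,4),(4,5),(5,6),(1,3)])
    (fun _ _ h => h.symm) (by decide)

/-- The Coxeter graph `E₈`. -/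
noncomputable def E8mat : CoxeterMat (Fin 8) :=
  ofAdj (listAdj [(0,2),(2,3),(3,4),(4,5),(5,6),(6,7),(1,3)])
    (fun _ _ h => h.symm) (by decide)

/-- The Coxeter graph `A_∞`: the one-sided infinite path. -/
noncomputable def Ainf : CoxeterMat ℕ :=
  ofAdj (fun i j => i + 1 = j ∨ j + 1 = i)
    (fun _ _ h => h.symm)
    (fun s h => by omega)

/-- The Coxeter graph `_∞A_∞`: the two-sided infinite path. -/
noncomputable def ZAinf : CoxeterMat ℤ :=
  ofAdj (fun i j => i + 1 = j ∨ j + 1 = i)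
    (fun _ _ h => h.symm)
    (fun s h => by omega)

/-- The Coxeter graph `D_∞`: vertices `0, 1, 2, 3, …` with `0` and `1` joined to `2` and a
path `2 — 3 — 4 — ⋯`. -/
noncomputable def Dinf : CoxeterMat ℕ :=
  ofAdj (fun i j => i ≠ j ∧
      (((i = 0 ∧ j = 2) ∨ (i = 1 ∧ j = 2) ∨ (i + 1 = j ∧ 2 ≤ i)) ∨
       ((j = 0 ∧ i = 2) ∨ (j = 1 ∧ i = 2) ∨ (j + 1 = i ∧ 2 ≤ j))))
    (fun _ _ h => ⟨h.1.symm, h.2.symm⟩)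
    (fun s h => h.1 rfl)

/-- The affine Coxeter graph `Ã_n`: a cycle with `n + 1` vertices. -/
noncomputable def affA (n : ℕ) : CoxeterMat (ZMod (n + 1)) :=
  ofAdj (fun i j => i ≠ j ∧ (i + 1 = j ∨ j + 1 = i))
    (fun _ _ h => ⟨h.1.symm, h.2.symm⟩)
    (fun s h => h.1 rfl)

/-- The affine Coxeter graph `D̃_n` (on `n + 1` vertices, Bourbaki numbering): `0` and `1`
joined to `2`, a path `2 — 3 — ⋯ — (n-1)`, and `n` joined to `n-2`. -/
noncomputable def affD (n : ℕ) : CoxeterMat (Fin (n + 1)) :=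
  ofAdj (fun i j => i ≠ j ∧
      (((i.val = 0 ∧ j.val = 2) ∨ (i.val = 1 ∧ j.val = 2) ∨
        (i.val + 1 = j.val ∧ 2 ≤ i.val ∧ i.val ≤ n - 2) ∨
        (i.val = n - 2 ∧ j.val = n)) ∨
       ((j.val = 0 ∧ i.val = 2) ∨ (j.val = 1 ∧ i.val = 2) ∨
        (j.val + 1 = i.val ∧ 2 ≤ j.val ∧ j.val ≤ n - 2) ∨
        (j.val = n - 2 ∧ i.val = n))))
    (fun _ _ h => ⟨h.1.symm, h.2.symm⟩)
    (fun s h => h.1 rfl)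

/-- The affine Coxeter graph `Ẽ₆` (Bourbaki numbering, affine vertex `0`). -/
noncomputable def affE6 : CoxeterMat (Fin 7) :=
  ofAdj (listAdj [(1,3),(3,4),(4,5),(5,6),(2,4),(0,2)])
    (fun _ _ h => h.symm) (by decide)

/-- The affine Coxeter graph `Ẽ₇` (Bourbaki numbering, affine vertex `0`). -/
noncomputable def affE7 : CoxeterMat (Fin 8) :=
  ofAdj (listAdj [(0,1),(1,3),(3,4),(4,5),(5,6),(6,7),(2,4)])
    (fun _ _ h => h.symm) (by decide)

/-- The affine Coxeter graph `Ẽ₈` (Bourbaki numbering, affine vertex `0`). -/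
noncomputable def affE8 : CoxeterMat (Fin 9) :=
  ofAdj (listAdj [(1,3),(3,4),(4,5),(5,6),(6,7),(7,8),(2,4),(0,8)])
    (fun _ _ h => h.symm) (by decide)

/-!
If `g β ≠ β`, then `⟨β, g β⟩ = 0`. The root `γ = r_β(α) = α - ⟨α, β⟩ β` is also moved by `g`,
because `g α = α` and `⟨α, β⟩ ≠ 0`, so `⟨γ, g γ⟩ = 0` as well. Expanding with `g` an isometry
fixing `α` gives `⟨γ, g γ⟩ = 2 - 2⟨α, β⟩²`, hence `⟨α, β⟩ = ±1`.
-/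

namespace CoxeterMat

variable {S : Type*} (M : CoxeterMat S)

lemma c_self (s : S) : M.c s s = 2 := by
  simp [c, M.diagonal s, Real.cos_pi]

lemma c_comm (s t : S) : M.c s t = M.c t s := by
  simp [c, M.symmetric s t]

lemma bform_sroot_sroot (s t : S) : M.bform (sroot s) (sroot t) = M.c s t := by
  simp [bform, sroot]

lemma bform_sroot_self (s : S) : M.bform (sroot s) (sroot s) = 2 := by
  rw [bform_sroot_sroot, c_self]

lemma bform_comm (x y : S →₀ ℝ) : M.bform x y = M.bform y x := by
  have hflip : M.bform = M.bform.flip :=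
    LinearMap.ext_basis Finsupp.basisSingleOne Finsupp.basisSingleOne fun s t => by
      simp only [Finsupp.coe_basisSingleOne, LinearMap.flip_apply]
      exact (M.bform_sroot_sroot s t).trans ((M.c_comm s t).trans (M.bform_sroot_sroot t s).symm)
  exact LinearMap.congr_fun₂ hflip x y

noncomputable def orthogonalGroup : Subgroup ((S →₀ ℝ) ≃ₗ[ℝ] (S →₀ ℝ)) where
  carrier := {w | M.bform.IsOrthogonal w}
  one_mem' _ _ := rfl
  mul_mem' hu hv x y := (hu _ _).trans (hv x y)
  inv_mem' {w} hw x y := by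
    rw [← hw]
    change M.bform (w (w.symm x)) (w (w.symm y)) = M.bform x y
    simp only [LinearEquiv.apply_symm_apply]

lemma sigma_apply (s : S) (x : S →₀ ℝ) :
    M.sigma s x = x - M.bform (sroot s) x • sroot s := rfl

lemma isOrthogonal_sigma (s : S) : M.bform.IsOrthogonal (M.sigma s) := fun x y => by
  simp only [sigma_apply, map_sub, map_smul, LinearMap.sub_apply, LinearMap.smul_apply,
    smul_eq_mul, bform_sroot_self, M.bform_comm x (sroot s)]
  ring

lemma sigma_involutive (s : S) : Function.Involutive (M.sigma s) := fun x => by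
  simp only [sigma_apply, map_sub, map_smul, bform_sroot_self]
  module

noncomputable def sigmaEquiv (s : S) : (S →₀ ℝ) ≃ₗ[ℝ] (S →₀ ℝ) :=
  LinearEquiv.ofInvolutive (M.sigma s) (M.sigma_involutive s)

lemma sigmaEquiv_mem_Wgrp (s : S) : M.sigmaEquiv s ∈ M.Wgrp :=
  Subgroup.subset_closure ⟨s, rfl⟩

lemma Wgrp_le_orthogonalGroup : M.Wgrp ≤ M.orthogonalGroup :=
  (Subgroup.closure_le _).2 fun w ⟨s, hs⟩ x y => by
    change M.bform ((w : (S →₀ ℝ) →ₗ[ℝ] (S →₀ ℝ)) x) ((w : (S →₀ ℝ) →ₗ[ℝ] (S →₀ ℝ)) y) = _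
    rw [hs]
    exact M.isOrthogonal_sigma s x y

lemma bform_self_of_mem_Phi {γ : S →₀ ℝ} (hγ : γ ∈ M.Phi) : M.bform γ γ = 2 := by
  obtain ⟨w, hw, s, rfl⟩ := hγ
  rw [M.Wgrp_le_orthogonalGroup hw, bform_sroot_self]

lemma conj_sigma_apply {w : (S →₀ ℝ) ≃ₗ[ℝ] (S →₀ ℝ)} (hw : w ∈ M.orthogonalGroup) (s : S)
    (x : S →₀ ℝ) :
    w (M.sigma s (w.symm x)) = x - M.bform (w (sroot s)) x • w (sroot s) := by
  have hx : M.bform (sroot s) (w.symm x) = M.bform (w (sroot s)) x := by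
    rw [← hw, LinearEquiv.apply_symm_apply]
  rw [sigma_apply, map_sub, map_smul, LinearEquiv.apply_symm_apply, hx]

lemma sub_bform_smul_mem_Phi {β x : S →₀ ℝ} (hβ : β ∈ M.Phi) (hx : x ∈ M.Phi) :
    x - M.bform β x • β ∈ M.Phi := by
  obtain ⟨w, hw, s, rfl⟩ := hβ
  obtain ⟨u, hu, t, rfl⟩ := hx
  refine ⟨w * M.sigmaEquiv s * w⁻¹ * u, ?_, t, ?_⟩
  · exact mul_mem (mul_mem (mul_mem hw (M.sigmaEquiv_mem_Wgrp s)) (inv_mem hw)) hu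
  · exact (M.conj_sigma_apply (M.Wgrp_le_orthogonalGroup hw) s (u (sroot t))).symm

lemma bform_reflection_apply {g : (S →₀ ℝ) →ₗ[ℝ] (S →₀ ℝ)} (hg : M.bform.IsOrthogonal g)
    {a : S →₀ ℝ} (haa : M.bform a a = 2) (hga : g a = a) (b : S →₀ ℝ) :
    M.bform (a - M.bform a b • b) (g (a - M.bform a b • b)) =
      2 - 2 * M.bform a b ^ 2 + M.bform a b ^ 2 * M.bform b (g b) := by
  have hagb : M.bform a (g b) = M.bform a b := by
    conv_lhs => rw [← hga]
    exact hg a b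
  simp only [map_sub, map_smul, LinearMap.sub_apply, LinearMap.smul_apply, smul_eq_mul, hga,
    haa, hagb, M.bform_comm b a]
  ring

end CoxeterMat

theorem stmt14_general {S : Type*} (M : CoxeterMat S) (g : (S →₀ ℝ) →ₗ[ℝ] (S →₀ ℝ))
    (hB : ∀ x y, M.bform (g x) (g y) = M.bform x y)
    (horth : ∀ c ∈ M.Phi, g c ≠ c → M.bform c (g c) = 0)
    (a b : S →₀ ℝ) (ha : a ∈ M.Phi) (hb : b ∈ M.Phi) (hga : g a = a)
    (hab : M.bform a b ∉ ({0, 1, -1} : Set ℝ)) :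
    g b = b := by
  by_contra hgb
  simp only [Set.mem_insert_iff, Set.mem_singleton_iff, not_or] at hab
  obtain ⟨hab0, hab1, hab_neg1⟩ := hab
  have hγ : a - M.bform a b • b ∈ M.Phi := by
    simpa only [M.bform_comm b a] using M.sub_bform_smul_mem_Phi hb ha
  have hgγ : g (a - M.bform a b • b) ≠ a - M.bform a b • b := by
    rw [map_sub, map_smul, hga]
    exact fun h => hgb (smul_right_injective _ hab0 (sub_right_injective h))
  have key := M.bform_reflection_apply hB (M.bform_self_of_mem_Phi ha) hga b
  rw [horth _ hγ hgγ, horth b hb hgb] at key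
  have hsq : M.bform a b ^ 2 = 1 := by linarith
  exact (sq_eq_one_iff.1 hsq).elim hab1 hab_neg1

/-- Let `g` be a linear map of `V` preserving the canonical bilinear form, mapping `Φ` to
`Φ`, and such that `⟨γ, g(γ)⟩ = 0` whenever `g(γ) ≠ γ` for `γ ∈ Φ`. If `α, β ∈ Φ` satisfy
`g(α) = α` and `⟨α, β⟩ ∉ {0, 1, -1}`, then `g(β) = β`. -/
theorem stmt14 {S : Type*} (M : CoxeterMat S) (g : (S →₀ ℝ) →ₗ[ℝ] (S →₀ ℝ))
    (hB : ∀ x y, M.bform (g x) (g y) = M.bform x y)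
    (hPhi : ∀ c ∈ M.Phi, g c ∈ M.Phi)
    (horth : ∀ c ∈ M.Phi, g c ≠ c → M.bform c (g c) = 0)
    (a b : S →₀ ℝ) (ha : a ∈ M.Phi) (hb : b ∈ M.Phi) (hga : g a = a)
    (hab : M.bform a b ∉ ({0, 1, -1} : Set ℝ)) :
    g b = b :=
  stmt14_general M g hB horth a b ha hb hga hab
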